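/- Let Φ ∈ ℝ^{M×N} have restricted isometry constant δ := δ_s < 1 of order s, let Λ_i ⊆ Λ_l ⊆ {1,…,N} with |Λ_l| ≤ s, set Ω = Λ_l \ Λ_i, and let x'_i and x'_l be least-squares estimates of y ∈ ℝ^M on Λ_i and Λ_l respectively. Then ‖y − Φx'_i‖² − ‖y − Φx'_l‖² ≥ ‖Φ_Ωᵀ(y − Φx'_i)‖² / (1 + δ), where Φ_Ω denotes the submatrix of Φ formed by the columns indexed by Ω. -/

import Mathlib

open Finset

noncomputable section

/-- The Euclidean (ℓ₂) norm of a vector in `Fin n → ℝ`. -/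
def l2norm {n : ℕ} (v : Fin n → ℝ) : ℝ := Real.sqrt (∑ i, (v i) ^ 2)

/-- The sparsity `‖v‖₀` of a vector: the number of its nonzero entries. -/
def sparsity {n : ℕ} (v : Fin n → ℝ) : ℕ := (Finset.univ.filter fun i => v i ≠ 0).card

/-- The support of a vector, as a `Finset`. -/
def suppF {n : ℕ} (v : Fin n → ℝ) : Finset (Fin n) := Finset.univ.filter fun i => v i ≠ 0

/-- `restr v S` is the vector agreeing with `v` on `S` and zero outside `S`. -/
def restr {n : ℕ} (v : Fin n → ℝ) (S : Finset (Fin n)) : Fin n → ℝ :=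
  fun i => if i ∈ S then v i else 0

/-- `Φ` has restricted isometry constant `δ < 1` of order `s`:
`(1-δ)‖z‖² ≤ ‖Φz‖² ≤ (1+δ)‖z‖²` for every `s`-sparse `z`. -/
def HasRIC {M N : ℕ} (Φ : Matrix (Fin M) (Fin N) ℝ) (s : ℕ) (δ : ℝ) : Prop :=
  δ < 1 ∧ ∀ z : Fin N → ℝ, sparsity z ≤ s →
    (1 - δ) * (l2norm z) ^ 2 ≤ (l2norm (Φ.mulVec z)) ^ 2 ∧
      (l2norm (Φ.mulVec z)) ^ 2 ≤ (1 + δ) * (l2norm z) ^ 2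

/-- `Λ` is a top-`k` support of `v`: `|Λ| = k` and every entry of `v` inside `Λ`
dominates (in magnitude) every entry outside `Λ`. -/
def IsTopSupport {n : ℕ} (v : Fin n → ℝ) (k : ℕ) (Λ : Finset (Fin n)) : Prop :=
  Λ.card = k ∧ ∀ i ∈ Λ, ∀ j ∉ Λ, |v j| ≤ |v i|

/-- `x'` is a least-squares estimate of `y` on the support `Λ`. -/
def IsLSE {M N : ℕ} (Φ : Matrix (Fin M) (Fin N) ℝ) (y : Fin M → ℝ)
    (Λ : Finset (Fin N)) (x' : Fin N → ℝ) : Prop :=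
  suppF x' ⊆ Λ ∧ ∀ z : Fin N → ℝ, suppF z ⊆ Λ →
    l2norm (y - Φ.mulVec x') ≤ l2norm (y - Φ.mulVec z)

lemma l2norm_sq {n : ℕ} (v : Fin n → ℝ) : l2norm v ^ 2 = ∑ i, v i ^ 2 :=
  Real.sq_sqrt (Finset.sum_nonneg fun i _ => sq_nonneg _)

lemma l2norm_nonneg {n : ℕ} (v : Fin n → ℝ) : 0 ≤ l2norm v := Real.sqrt_nonneg _

/-- lower bound on the decrease of squared residuals between nested
least-squares estimates: `‖y − Φx'ᵢ‖² − ‖y − Φx'ₗ‖² ≥ ‖Φ_Ωᵀ(y − Φx'ᵢ)‖²/(1 + δ)`,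
where `Ω = Λₗ \ Λᵢ` (the norm of `Φ_Ωᵀ(y − Φx'ᵢ)` is expressed as the norm of the
restriction of `Φᵀ(y − Φx'ᵢ)` to `Ω`). -/
theorem nested_lse_residual_gap_lower {M N : ℕ} (Φ : Matrix (Fin M) (Fin N) ℝ)
    (s : ℕ) (δ : ℝ) (hRIC : HasRIC Φ s δ)
    (Λi Λl : Finset (Fin N)) (hsub : Λi ⊆ Λl) (hcard : Λl.card ≤ s)
    (y : Fin M → ℝ)
    (xi xl : Fin N → ℝ) (hi : IsLSE Φ y Λi xi) (hl : IsLSE Φ y Λl xl) :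
    (l2norm (restr (Φ.transpose.mulVec (y - Φ.mulVec xi)) (Λl \ Λi))) ^ 2 / (1 + δ) ≤
      (l2norm (y - Φ.mulVec xi)) ^ 2 - (l2norm (y - Φ.mulVec xl)) ^ 2 := by
  obtain ⟨hδ, hR⟩ := hRIC
  set r : Fin M → ℝ := y - Φ.mulVec xi with hrdef
  set w : Fin N → ℝ := Φ.transpose.mulVec r with hwdef
  set v : Fin N → ℝ := restr w (Λl \ Λi) with hvdef
  -- RHS nonneg
  have hxl_le : l2norm (y - Φ.mulVec xl) ≤ l2norm r := hl.2 xi (hi.1.trans hsub)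
  have hRHS : 0 ≤ l2norm r ^ 2 - l2norm (y - Φ.mulVec xl) ^ 2 := by
    have := pow_le_pow_left₀ (l2norm_nonneg _) hxl_le 2
    linarith
  by_cases hpos : 0 < 1 + δ
  · -- main case
    set t : ℝ := 1 / (1 + δ) with htdef
    have htpos : 0 < t := by positivity
    -- support of v
    have hsuppv : suppF v ⊆ Λl := by
      intro i hi'
      simp only [suppF, mem_filter, mem_univ, true_and] at hi'
      by_cases h : i ∈ Λl \ Λi
      · exact (mem_sdiff.mp h).1
      · exact absurd (by simp [hvdef, restr, h]) hi'
    have hsparsv : sparsity v ≤ s := by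
      have : sparsity v = (suppF v).card := rfl
      rw [this]
      exact le_trans (Finset.card_le_card hsuppv) hcard
    -- support of z = xi + t • v
    have hsuppz : suppF (xi + t • v) ⊆ Λl := by
      intro i hi'
      simp only [suppF, mem_filter, mem_univ, true_and, Pi.add_apply, Pi.smul_apply,
        smul_eq_mul] at hi'
      by_cases hxi : xi i = 0
      · by_cases hv : v i = 0
        · exact absurd (by rw [hxi, hv]; ring) hi'
        · exact hsuppv (by simp [suppF, hv])
      · exact hsub (hi.1 (by simp [suppF, hxi]))
    -- dot product identity: ∑ w i * v i = ∑ v i ^ 2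
    have hdot : ∑ i, w i * v i = ∑ i, v i ^ 2 := by
      apply Finset.sum_congr rfl
      intro i _
      by_cases h : i ∈ Λl \ Λi <;> simp [hvdef, restr, h, sq]
    -- transpose identity: ∑ i, r i * (Φ.mulVec v) i = ∑ i, w i * v i
    have htrans : ∑ i, r i * (Φ.mulVec v) i = ∑ i, w i * v i := by
      have : dotProduct r (Φ.mulVec v) = dotProduct (Φ.vecMul r) v := by
        rw [Matrix.dotProduct_mulVec]
      rw [hwdef, Matrix.mulVec_transpose]
      exact this
    -- residual expansion
    have hmul : Φ.mulVec (xi + t • v) = Φ.mulVec xi + t • Φ.mulVec v := by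
      rw [Matrix.mulVec_add, Matrix.mulVec_smul]
    have hexp : l2norm (y - Φ.mulVec (xi + t • v)) ^ 2 =
        l2norm r ^ 2 - 2 * t * (∑ i, v i ^ 2) + t ^ 2 * (l2norm (Φ.mulVec v)) ^ 2 := by
      rw [l2norm_sq, l2norm_sq, l2norm_sq, hmul]
      have h1 : ∀ i, (y - (Φ.mulVec xi + t • Φ.mulVec v)) i
          = r i - t * (Φ.mulVec v) i := by
        intro i; simp [hrdef]; ring
      calc ∑ i, ((y - (Φ.mulVec xi + t • Φ.mulVec v)) i) ^ 2
          = ∑ i, (r i ^ 2 - 2 * t * (r i * (Φ.mulVec v) i) + t ^ 2 * ((Φ.mulVec v) i) ^ 2) := by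
            apply Finset.sum_congr rfl; intro i _; rw [h1 i]; ring
        _ = (∑ i, r i ^ 2) - 2 * t * (∑ i, r i * (Φ.mulVec v) i)
              + t ^ 2 * ∑ i, ((Φ.mulVec v) i) ^ 2 := by
            rw [Finset.sum_add_distrib, Finset.sum_sub_distrib, ← Finset.mul_sum,
              ← Finset.mul_sum]
        _ = _ := by rw [htrans, hdot]
    -- optimality of xl against z
    have hopt : l2norm (y - Φ.mulVec xl) ^ 2 ≤ l2norm (y - Φ.mulVec (xi + t • v)) ^ 2 :=
      pow_le_pow_left₀ (l2norm_nonneg _) (hl.2 _ hsuppz) 2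
    -- RIC upper bound
    have hric : l2norm (Φ.mulVec v) ^ 2 ≤ (1 + δ) * l2norm v ^ 2 := (hR v hsparsv).2
    -- put together
    rw [div_le_iff₀ hpos]
    rw [l2norm_sq v] at hric
    have hVnn : (0:ℝ) ≤ ∑ i, v i ^ 2 := Finset.sum_nonneg fun i _ => sq_nonneg _
    have hLHS : l2norm v ^ 2 = ∑ i, v i ^ 2 := l2norm_sq v
    rw [hLHS]
    have ht2 : t * (1 + δ) = 1 := by rw [htdef, one_div, inv_mul_cancel₀ hpos.ne']
    have ht3 : t ^ 2 * (1 + δ) = t := by rw [sq, mul_assoc, ht2, mul_one]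
    have h1 : t ^ 2 * l2norm (Φ.mulVec v) ^ 2 ≤ t * ∑ i, v i ^ 2 := by
      calc t ^ 2 * l2norm (Φ.mulVec v) ^ 2
          ≤ t ^ 2 * ((1 + δ) * ∑ i, v i ^ 2) :=
            mul_le_mul_of_nonneg_left hric (sq_nonneg t)
        _ = t * ∑ i, v i ^ 2 := by rw [← mul_assoc, ht3]
    have hA : t * ∑ i, v i ^ 2 ≤ l2norm r ^ 2 - l2norm (y - Φ.mulVec xl) ^ 2 := by
      linarith [hopt, hexp]
    have h2 := mul_le_mul_of_nonneg_right hA hpos.le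
    have heq : (t * ∑ i, v i ^ 2) * (1 + δ) = ∑ i, v i ^ 2 := by
      rw [mul_right_comm, ht2, one_mul]
    linarith
  · -- degenerate case
    push_neg at hpos
    have : l2norm v ^ 2 / (1 + δ) ≤ 0 :=
      div_nonpos_of_nonneg_of_nonpos (sq_nonneg _) hpos
    linarith
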